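/- arXiv:2502.20810 — 4 statements merged into one kernel-verified Lean document; each statement's English description precedes it below -/
import Mathlib

section
/- The map ρ: Y_{M|N}(s) → Y_{N|M}(s^d) sending t_{i,j}(u) to t_{M+N+1-i, M+N+1-j}(-u) is an isomorphism of superalgebras, where s^d is the reverse of the sequence obtained from s by interchanging 0's and 1's. -/
/-- Index type of the RTT generators `t_{i,j}^{(r)}` of the super Yangian. -/
abbrev YGen (n : ℕ) := Fin n × Fin n × ℕ

/-- The generator `t_{i,j}^{(r)}` inside the free algebra. -/
def yX (k : Type*) [Field k] (n : ℕ) (i j : Fin n) (r : ℕ) :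
    FreeAlgebra k (YGen n) :=
  FreeAlgebra.ι k (i, j, r)

/-- The defining relations of the super Yangian: `t_{i,j}^{(0)} = δ_{ij}` and the RTT
supercommutator relations, where `par i` is the `i`-th digit of the fixed
`0^M 1^N`-sequence. -/
inductive YangianRel (k : Type*) [Field k] (n : ℕ) (par : Fin n → ℕ) :
    FreeAlgebra k (YGen n) → FreeAlgebra k (YGen n) → Prop
  | unit (i j : Fin n) :
      YangianRel k n par (yX k n i j 0) (if i = j then 1 else 0)
  | rtt (i j l m : Fin n) (r s : ℕ) :
      YangianRel k n par
        (yX k n i j r * yX k n l m s -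
          ((-1 : k) ^ ((par i + par j) * (par l + par m))) •
            (yX k n l m s * yX k n i j r))
        (((-1 : k) ^ (par i * par j + par i * par l + par j * par l)) •
          ∑ x ∈ Finset.range (min r s),
            (yX k n l j x * yX k n i m (r + s - 1 - x) -
              yX k n l j (r + s - 1 - x) * yX k n i m x))

/-- The super Yangian `Y_{M|N}` (for the `0^M 1^N`-sequence encoded by `par`). -/
abbrev Yangian (k : Type*) [Field k] (n : ℕ) (par : Fin n → ℕ) :=
  RingQuot (YangianRel k n par)

/-- The RTT generator `t_{i,j}^{(r)}` of the super Yangian. -/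
def yT (k : Type*) [Field k] (n : ℕ) (par : Fin n → ℕ) (i j : Fin n) (r : ℕ) :
    Yangian k n par :=
  RingQuot.mkAlgHom k (YangianRel k n par) (yX k n i j r)

/-!
Reversing the indices and negating the spectral parameter, `t_{i,j}(u) ↦ t_{i',j'}(-u)`,
multiplies both sides of the RTT relation for `(i, j, l, m, r, s)` by `(-1)^(r+s)`, except for one
extra sign on the right: the summands pick up `(-1)^(r+s-1)`. Passing from the sequence `s` to
`s^d` complements every parity, which leaves the supercommutator sign `(-1)^{(|i|+|j|)(|l|+|m|)}`
unchanged and flips the sign `(-1)^{|i||j|+|i||l|+|j||l|}`, compensating exactly. So the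
assignment descends to the quotients, and since `s^{dd} = s` it is an involution up to the
identification, hence an isomorphism.
-/

section Signs

variable {R : Type*} [Ring R]

lemma neg_one_pow_complement_parity_mul {a b c d : ℕ}
    (ha : a ≤ 1) (hb : b ≤ 1) (hc : c ≤ 1) (hd : d ≤ 1) :
    (-1 : R) ^ ((1 - a + (1 - b)) * (1 - c + (1 - d))) = (-1 : R) ^ ((a + b) * (c + d)) := by
  rw [neg_one_pow_eq_pow_mod_two, neg_one_pow_eq_pow_mod_two (n := (a + b) * (c + d))]
  interval_cases a <;> interval_cases b <;> interval_cases c <;> interval_cases d <;> rfl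

lemma neg_one_pow_complement_parity_pairwise {a b c : ℕ}
    (ha : a ≤ 1) (hb : b ≤ 1) (hc : c ≤ 1) :
    (-1 : R) ^ ((1 - a) * (1 - b) + (1 - a) * (1 - c) + (1 - b) * (1 - c))
      = -(-1 : R) ^ (a * b + a * c + b * c) := by
  rw [show -(-1 : R) ^ (a * b + a * c + b * c) = (-1) ^ (a * b + a * c + b * c + 1) by
      rw [pow_succ, mul_neg_one], neg_one_pow_eq_pow_mod_two,
    neg_one_pow_eq_pow_mod_two (n := _ + 1)]
  interval_cases a <;> interval_cases b <;> interval_cases c <;> rfl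

lemma neg_one_pow_mul_neg_one_pow_sub {x r s : ℕ} (hx : x < min r s) :
    (-1 : R) ^ x * (-1 : R) ^ (r + s - 1 - x) = -(-1 : R) ^ (r + s) := by
  obtain ⟨t, ht⟩ : ∃ t, r + s = t + 1 := ⟨r + s - 1, by omega⟩
  rw [← pow_add, show x + (r + s - 1 - x) = r + s - 1 by omega, ht, Nat.add_sub_cancel, pow_succ,
    mul_neg_one, neg_neg]

end Signs

/-- `par'` is the parity sequence `s^d` of `par`: reversed and with `0`s and `1`s interchanged. -/
def IsDualParity {n : ℕ} (par par' : Fin n → ℕ) : Prop :=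
  ∀ i, par i + par' i.rev = 1

namespace IsDualParity

variable {n : ℕ} {par par' : Fin n → ℕ}

lemma symm (h : IsDualParity par par') : IsDualParity par' par := fun i => by
  simpa [Fin.rev_rev, add_comm] using h i.rev

lemma le_one (h : IsDualParity par par') (i : Fin n) : par i ≤ 1 := by
  have := h i; omega

lemma apply_rev (h : IsDualParity par par') (i : Fin n) : par' i.rev = 1 - par i := by
  have := h i; omega

lemma of_le_one (hpar : ∀ i, par i ≤ 1) : IsDualParity par fun i => 1 - par i.rev := fun i => by
  have := hpar i; simp only [Fin.rev_rev]; omega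

end IsDualParity

namespace Yangian

variable {k : Type*} [Field k] {n : ℕ}

lemma mkAlgHom_yX (par : Fin n → ℕ) (i j : Fin n) (r : ℕ) :
    RingQuot.mkAlgHom k (YangianRel k n par) (yX k n i j r) = yT k n par i j r := rfl

lemma yT_zero (par : Fin n → ℕ) (i j : Fin n) :
    yT k n par i j 0 = if i = j then 1 else 0 := by
  rw [yT, RingQuot.mkAlgHom_rel k (YangianRel.unit i j)]
  split_ifs <;> simp

lemma yT_rtt (par : Fin n → ℕ) (i j l m : Fin n) (r s : ℕ) :
    yT k n par i j r * yT k n par l m s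
        - (-1 : k) ^ ((par i + par j) * (par l + par m)) • (yT k n par l m s * yT k n par i j r)
      = (-1 : k) ^ (par i * par j + par i * par l + par j * par l) •
          ∑ x ∈ Finset.range (min r s),
            (yT k n par l j x * yT k n par i m (r + s - 1 - x)
              - yT k n par l j (r + s - 1 - x) * yT k n par i m x) := by
  have := RingQuot.mkAlgHom_rel k (YangianRel.rtt (k := k) (par := par) i j l m r s)
  simpa only [map_sub, map_smul, map_mul, map_sum, mkAlgHom_yX] using this

noncomputable def reverseLift (par' : Fin n → ℕ) :
    FreeAlgebra k (YGen n) →ₐ[k] Yangian k n par' :=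
  FreeAlgebra.lift k fun g => (-1 : k) ^ g.2.2 • yT k n par' g.1.rev g.2.1.rev g.2.2

lemma reverseLift_yX (par' : Fin n → ℕ) (i j : Fin n) (r : ℕ) :
    reverseLift par' (yX k n i j r) = (-1 : k) ^ r • yT k n par' i.rev j.rev r := by
  simp [reverseLift, yX]

lemma reverseLift_sum_rtt (par' : Fin n → ℕ) (i j l m : Fin n) (r s : ℕ) :
    reverseLift par' (∑ x ∈ Finset.range (min r s),
        (yX k n l j x * yX k n i m (r + s - 1 - x) - yX k n l j (r + s - 1 - x) * yX k n i m x))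
      = -(-1 : k) ^ (r + s) • ∑ x ∈ Finset.range (min r s),
          (yT k n par' l.rev j.rev x * yT k n par' i.rev m.rev (r + s - 1 - x)
            - yT k n par' l.rev j.rev (r + s - 1 - x) * yT k n par' i.rev m.rev x) := by
  simp only [map_sum, map_sub, map_mul, reverseLift_yX, smul_mul_smul_comm, Finset.smul_sum,
    smul_sub]
  refine Finset.sum_congr rfl fun x hx => ?_
  have hx := Finset.mem_range.mp hx
  rw [neg_one_pow_mul_neg_one_pow_sub hx, mul_comm, neg_one_pow_mul_neg_one_pow_sub hx]

variable {par par' : Fin n → ℕ}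

lemma reverseLift_rel (h : IsDualParity par par') ⦃a b : FreeAlgebra k (YGen n)⦄
    (hab : YangianRel k n par a b) : reverseLift par' a = reverseLift par' b := by
  induction hab with
  | unit i j =>
    simp only [reverseLift_yX, pow_zero, one_smul, yT_zero, Fin.rev_inj]
    split_ifs <;> simp
  | rtt i j l m r s =>
    have hrel := yT_rtt (k := k) par' i.rev j.rev l.rev m.rev r s
    simp only [h.apply_rev] at hrel
    rw [neg_one_pow_complement_parity_mul (h.le_one i) (h.le_one j) (h.le_one l) (h.le_one m),
      neg_one_pow_complement_parity_pairwise (h.le_one i) (h.le_one j) (h.le_one l)] at hrel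
    rw [map_smul, reverseLift_sum_rtt]
    simp only [map_sub, map_smul, map_mul, reverseLift_yX, smul_mul_smul_comm]
    linear_combination (norm := module) ((-1 : k) ^ r * (-1 : k) ^ s) • hrel

noncomputable def reverse (h : IsDualParity par par') :
    Yangian k n par →ₐ[k] Yangian k n par' :=
  RingQuot.liftAlgHom k ⟨reverseLift par', reverseLift_rel h⟩

lemma reverse_yT (h : IsDualParity par par') (i j : Fin n) (r : ℕ) :
    reverse h (yT k n par i j r) = (-1 : k) ^ r • yT k n par' i.rev j.rev r := by
  rw [yT, reverse, RingQuot.liftAlgHom_mkAlgHom_apply, reverseLift_yX]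

lemma reverse_comp_reverse (h : IsDualParity par par') :
    (reverse h.symm).comp (reverse h) = AlgHom.id k (Yangian k n par) := by
  ext ⟨i, j, r⟩
  change reverse h.symm (reverse h (yT k n par i j r)) = yT k n par i j r
  rw [reverse_yT, map_smul, reverse_yT, smul_smul, ← pow_add, Even.neg_one_pow ⟨r, rfl⟩,
    one_smul, Fin.rev_rev, Fin.rev_rev]

noncomputable def reverseEquiv (h : IsDualParity par par') :
    Yangian k n par ≃ₐ[k] Yangian k n par' :=
  AlgEquiv.ofAlgHom (reverse h) (reverse h.symm) (reverse_comp_reverse h.symm)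
    (reverse_comp_reverse h)

end Yangian

theorem statement6_general (k : Type*) [Field k]
    (M N : ℕ) (par : Fin (M + N) → ℕ) (hpar : ∀ i, par i ≤ 1) :
    ∃ ρ : Yangian k (M + N) par ≃ₐ[k] Yangian k (M + N) (fun i => 1 - par i.rev),
      ∀ (i j : Fin (M + N)) (r : ℕ),
        ρ (yT k (M + N) par i j r)
          = ((-1 : k) ^ r) • yT k (M + N) (fun i => 1 - par i.rev) i.rev j.rev r := by
  exact ⟨Yangian.reverseEquiv (.of_le_one hpar), Yangian.reverse_yT _⟩

/-- the map `ρ : Y_{M|N}(s) → Y_{N|M}(s^d)`,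
`ρ(t_{i,j}(u)) = t_{M+N+1-i, M+N+1-j}(-u)` (i.e. coefficientwise
`t_{i,j}^{(r)} ↦ (-1)^r t_{rev i, rev j}^{(r)}`), is an isomorphism of superalgebras,
where `s^d` is the reverse of the sequence obtained from `s` by interchanging `0`'s and
`1`'s: its `i`-th digit is `1 - par (rev i)`. -/
theorem statement6 (k : Type*) [Field k]
    (M N : ℕ) (par : Fin (M + N) → ℕ) (hpar : ∀ i, par i ≤ 1)
    (hM : (Finset.univ.filter fun i => par i = 0).card = M) :
    ∃ ρ : Yangian k (M + N) par ≃ₐ[k] Yangian k (M + N) (fun i => 1 - par i.rev),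
      ∀ (i j : Fin (M + N)) (r : ℕ),
        ρ (yT k (M + N) par i j r)
          = ((-1 : k) ^ r) • yT k (M + N) (fun i => 1 - par i.rev) i.rev j.rev r :=
  statement6_general k M N par hpar
end

section
/- The comultiplication Δ(t_{i,j}^{(r)}) = Σ_{s=0}^r Σ_{k=1}^{M+N} t_{i,k}^{(r-s)} ⊗ t_{k,j}^{(s)} extends to a well-defined superalgebra homomorphism Δ: Y_{M|N} → Y_{M|N} ⊗ Y_{M|N}. -/
/-- The generator `t_{i,j}^{(r)} ⊗ 1` of the (graded) tensor square, in the free algebra. -/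
def xL (k : Type*) [Field k] (n : ℕ) (i j : Fin n) (r : ℕ) :
    FreeAlgebra k (YGen n ⊕ YGen n) :=
  FreeAlgebra.ι k (Sum.inl (i, j, r))

/-- The generator `1 ⊗ t_{i,j}^{(r)}` of the (graded) tensor square, in the free algebra. -/
def xR (k : Type*) [Field k] (n : ℕ) (i j : Fin n) (r : ℕ) :
    FreeAlgebra k (YGen n ⊕ YGen n) :=
  FreeAlgebra.ι k (Sum.inr (i, j, r))

/-- Presentation of the graded (super) tensor product `Y_{M|N} ⊗ Y_{M|N}`: both tensor
factors satisfy the super Yangian relations, and the two factors supercommute with the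
Koszul sign `(a ⊗ b)(c ⊗ d) = (-1)^{|b||c|} ac ⊗ bd` on the homogeneous generators. -/
inductive YYRel (k : Type*) [Field k] (n : ℕ) (par : Fin n → ℕ) :
    FreeAlgebra k (YGen n ⊕ YGen n) → FreeAlgebra k (YGen n ⊕ YGen n) → Prop
  | left_unit (i j : Fin n) :
      YYRel k n par (xL k n i j 0) (if i = j then 1 else 0)
  | left_rtt (i j l m : Fin n) (r s : ℕ) :
      YYRel k n par
        (xL k n i j r * xL k n l m s -
          ((-1 : k) ^ ((par i + par j) * (par l + par m))) •
            (xL k n l m s * xL k n i j r))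
        (((-1 : k) ^ (par i * par j + par i * par l + par j * par l)) •
          ∑ x ∈ Finset.range (min r s),
            (xL k n l j x * xL k n i m (r + s - 1 - x) -
              xL k n l j (r + s - 1 - x) * xL k n i m x))
  | right_unit (i j : Fin n) :
      YYRel k n par (xR k n i j 0) (if i = j then 1 else 0)
  | right_rtt (i j l m : Fin n) (r s : ℕ) :
      YYRel k n par
        (xR k n i j r * xR k n l m s -
          ((-1 : k) ^ ((par i + par j) * (par l + par m))) •
            (xR k n l m s * xR k n i j r))
        (((-1 : k) ^ (par i * par j + par i * par l + par j * par l)) •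
          ∑ x ∈ Finset.range (min r s),
            (xR k n l j x * xR k n i m (r + s - 1 - x) -
              xR k n l j (r + s - 1 - x) * xR k n i m x))
  | cross (i j l m : Fin n) (r s : ℕ) :
      YYRel k n par
        (xR k n l m s * xL k n i j r)
        (((-1 : k) ^ ((par i + par j) * (par l + par m))) •
          (xL k n i j r * xR k n l m s))

/-- The graded (super) tensor product `Y_{M|N} ⊗ Y_{M|N}`, presented by generators and
relations. -/
abbrev YangianTensor (k : Type*) [Field k] (n : ℕ) (par : Fin n → ℕ) :=
  RingQuot (YYRel k n par)

/-- `t_{i,j}^{(r)} ⊗ 1` in the graded tensor square. -/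
def tL (k : Type*) [Field k] (n : ℕ) (par : Fin n → ℕ) (i j : Fin n) (r : ℕ) :
    YangianTensor k n par :=
  RingQuot.mkAlgHom k (YYRel k n par) (xL k n i j r)

/-- `1 ⊗ t_{i,j}^{(r)}` in the graded tensor square. -/
def tR (k : Type*) [Field k] (n : ℕ) (par : Fin n → ℕ) (i j : Fin n) (r : ℕ) :
    YangianTensor k n par :=
  RingQuot.mkAlgHom k (YYRel k n par) (xR k n i j r)

/-!
Since `t^{(0)} = 1`, the RTT relations are equivalent to their difference form
`[t_{ij}^{(r+1)}, t_{lm}^{(s)}] - [t_{ij}^{(r)}, t_{lm}^{(s+1)}]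
  = ± (t_{lj}^{(r)} t_{im}^{(s)} - t_{lj}^{(s)} t_{im}^{(r)})`.
Write `Δ(T(u)) = L(u) R(u)` with `L = T ⊗ 1` and `R = 1 ⊗ T`. Moving all `L`'s to the left with
the Koszul rule, the supercommutator of two entries of `L(u) R(u)` splits into a part carrying
supercommutators of `L`'s and a part carrying supercommutators of `R`'s. In the difference form
each part telescopes along the antidiagonal (the boundary terms are supercommutators with
`t^{(0)} = 1`, hence vanish), and the difference relations of `L` and `R` reassemble the
right-hand side for `L(u) R(u)`.
-/

open Finset

lemma neg_one_pow_eq_of_cast_eq {R : Type*} [Ring R] {a b : ℕ} (h : (a : ZMod 2) = b) :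
    (-1 : R) ^ a = (-1) ^ b := by
  rw [neg_one_pow_eq_pow_mod_two, neg_one_pow_eq_pow_mod_two b,
    (ZMod.natCast_eq_natCast_iff' a b 2).mp h]

lemma sum_antidiagonal_telescope_fst {M : Type*} [AddCommGroup M]
    (f : ℕ × ℕ → ℕ × ℕ → M) (hP : ∀ t Q, f (0, t) Q = 0) (hQ : ∀ P t, f P (0, t) = 0)
    (r s : ℕ) :
    ∑ P ∈ antidiagonal (r + 1), ∑ Q ∈ antidiagonal s, f P Q
        - ∑ P ∈ antidiagonal r, ∑ Q ∈ antidiagonal (s + 1), f P Q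
      = ∑ P ∈ antidiagonal r, ∑ Q ∈ antidiagonal s,
          (f (P.1 + 1, P.2) Q - f P (Q.1 + 1, Q.2)) := by
  simp only [Nat.sum_antidiagonal_succ, hP, hQ, sum_const_zero, zero_add, ← sum_sub_distrib]

lemma sum_antidiagonal_telescope_snd {M : Type*} [AddCommGroup M]
    (f : ℕ × ℕ → ℕ × ℕ → M) (hP : ∀ t Q, f (t, 0) Q = 0) (hQ : ∀ P t, f P (t, 0) = 0)
    (r s : ℕ) :
    ∑ P ∈ antidiagonal (r + 1), ∑ Q ∈ antidiagonal s, f P Q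
        - ∑ P ∈ antidiagonal r, ∑ Q ∈ antidiagonal (s + 1), f P Q
      = ∑ P ∈ antidiagonal r, ∑ Q ∈ antidiagonal s,
          (f (P.1, P.2 + 1) Q - f P (Q.1, Q.2 + 1)) := by
  simp only [Nat.sum_antidiagonal_succ', hP, hQ, sum_const_zero, zero_add,
    ← sum_sub_distrib]

section RTT

variable (k : Type*) {A : Type*} [CommRing k] [Ring A] [Algebra k A] {n : ℕ} (par : Fin n → ℕ)

def IsIdAtZero (X : Fin n → Fin n → ℕ → A) : Prop :=
  ∀ i j, X i j 0 = if i = j then 1 else 0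

def superComm (X : Fin n → Fin n → ℕ → A) (i j l m : Fin n) (r s : ℕ) : A :=
  X i j r * X l m s - ((-1 : k) ^ ((par i + par j) * (par l + par m))) • (X l m s * X i j r)

def rttSum (X : Fin n → Fin n → ℕ → A) (i j l m : Fin n) (r s : ℕ) : A :=
  ∑ x ∈ range (min r s), (X l j x * X i m (r + s - 1 - x) - X l j (r + s - 1 - x) * X i m x)

def IsRTT (X : Fin n → Fin n → ℕ → A) : Prop :=
  ∀ i j l m r s, superComm k par X i j l m r s =
    ((-1 : k) ^ (par i * par j + par i * par l + par j * par l)) • rttSum X i j l m r s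

def IsRTTDiff (X : Fin n → Fin n → ℕ → A) : Prop :=
  ∀ i j l m r s, superComm k par X i j l m (r + 1) s - superComm k par X i j l m r (s + 1) =
    ((-1 : k) ^ (par i * par j + par i * par l + par j * par l)) •
      (X l j r * X i m s - X l j s * X i m r)

def SuperCommute (L R : Fin n → Fin n → ℕ → A) : Prop :=
  ∀ i j l m r s,
    R l m s * L i j r = ((-1 : k) ^ ((par i + par j) * (par l + par m))) • (L i j r * R l m s)

/-- The coefficients of the product `L(u) R(u)` of the matrix series
`L(u) = ∑ᵣ L^{(r)} u^{-r}` and `R(u) = ∑ᵣ R^{(r)} u^{-r}`. -/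
def matSeriesMul (L R : Fin n → Fin n → ℕ → A) (i j : Fin n) (r : ℕ) : A :=
  ∑ P ∈ antidiagonal r, ∑ a, L i a P.1 * R a j P.2

/-- The `(P, Q)`-summand of `matSeriesMul L R i j r * matSeriesMul L R l m s` once the factors
of `L` have been moved to the left of those of `R`. -/
def orderedProd (L R : Fin n → Fin n → ℕ → A) (i j l m : Fin n) (P Q : ℕ × ℕ) : A :=
  ∑ a, ∑ b, ((-1 : k) ^ ((par l + par b) * (par a + par j))) •
    (L i a P.1 * L l b Q.1 * (R a j P.2 * R b m Q.2))

def leftPart (L R : Fin n → Fin n → ℕ → A) (i j l m : Fin n) (P Q : ℕ × ℕ) : A :=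
  ∑ a, ∑ b, ((-1 : k) ^ ((par l + par b) * (par a + par j))) •
    (superComm k par L i a l b P.1 Q.1 * (R a j P.2 * R b m Q.2))

def rightPart (L R : Fin n → Fin n → ℕ → A) (i j l m : Fin n) (P Q : ℕ × ℕ) : A :=
  ∑ a, ∑ b, ((-1 : k) ^ ((par l + par b) * (par a + par j)) *
      (-1 : k) ^ ((par i + par a) * (par l + par b))) •
    (L l b Q.1 * L i a P.1 * superComm k par R a j b m P.2 Q.2)

variable {k par} {X L R : Fin n → Fin n → ℕ → A}

lemma rttSum_succ_sub_rttSum_succ (i j l m : Fin n) (r s : ℕ) :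
    rttSum X i j l m (r + 1) s - rttSum X i j l m r (s + 1)
      = X l j r * X i m s - X l j s * X i m r := by
  have reindex : ∀ x, r + 1 + s - 1 - x = r + s - x ∧ r + (s + 1) - 1 - x = r + s - x :=
    fun x => ⟨by omega, by omega⟩
  simp only [rttSum, reindex]
  rcases lt_trichotomy r s with h | rfl | h
  · rw [min_eq_left (by omega), min_eq_left (by omega), sum_range_succ,
      show r + s - r = s by omega]
    abel
  · rw [min_eq_right (by omega), min_eq_left (by omega), sub_self, sub_self]
  · rw [min_eq_right (by omega), min_eq_right (by omega), sum_range_succ,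
      show r + s - s = r by omega]
    abel

lemma IsIdAtZero.superComm_zero_left (h0 : IsIdAtZero X) (i j l m : Fin n) (s : ℕ) :
    superComm k par X i j l m 0 s = 0 := by
  rw [superComm, h0]
  split_ifs with h
  · subst h
    rw [one_mul, mul_one, (Even.mul_right (a := par i + par i) ⟨par i, rfl⟩ _).neg_one_pow,
      one_smul, sub_self]
  · rw [zero_mul, mul_zero, smul_zero, sub_zero]

lemma IsIdAtZero.superComm_zero_right (h0 : IsIdAtZero X) (i j l m : Fin n) (r : ℕ) :
    superComm k par X i j l m r 0 = 0 := by
  rw [superComm, h0]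
  split_ifs with h
  · subst h
    rw [one_mul, mul_one, (Even.mul_left (a := par l + par l) ⟨par l, rfl⟩ _).neg_one_pow,
      one_smul, sub_self]
  · rw [zero_mul, mul_zero, smul_zero, sub_zero]

theorem isRTT_iff_isRTTDiff (h0 : IsIdAtZero X) : IsRTT k par X ↔ IsRTTDiff k par X := by
  refine ⟨fun h i j l m r s => ?_, fun h i j l m r s => ?_⟩
  · rw [h, h, ← smul_sub, rttSum_succ_sub_rttSum_succ]
  induction r generalizing s with
  | zero => rw [h0.superComm_zero_left, rttSum, Nat.zero_min, sum_range_zero, smul_zero]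
  | succ r ih =>
    rw [← sub_add_cancel (superComm k par X i j l m (r + 1) s)
      (superComm k par X i j l m r (s + 1)), h, ih, ← rttSum_succ_sub_rttSum_succ, ← smul_add,
      sub_add_cancel]

lemma IsIdAtZero.matSeriesMul (hL : IsIdAtZero L) (hR : IsIdAtZero R) :
    IsIdAtZero (matSeriesMul L R) := by
  unfold IsIdAtZero at hL hR
  intro i j
  simp [_root_.matSeriesMul, hL, hR]

lemma mul_mul_mul_comm_of_mul_eq_smul {c : k} {a b x y : A} (h : b * x = c • (x * b)) :
    a * b * (x * y) = c • (a * x * (b * y)) := by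
  rw [mul_assoc, ← mul_assoc b, h, smul_mul_assoc, mul_smul_comm]
  simp only [mul_assoc]

lemma SuperCommute.matSeriesMul_mul (hLR : SuperCommute k par L R) (i j l m : Fin n) (r s : ℕ) :
    matSeriesMul L R i j r * matSeriesMul L R l m s
      = ∑ P ∈ antidiagonal r, ∑ Q ∈ antidiagonal s, orderedProd k par L R i j l m P Q := by
  simp only [matSeriesMul, orderedProd, sum_mul_sum]
  exact sum_congr rfl fun P _ => sum_congr rfl fun Q _ => sum_congr rfl fun a _ =>
    sum_congr rfl fun b _ => mul_mul_mul_comm_of_mul_eq_smul (hLR l b a j Q.1 P.2)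

lemma SuperCommute.superComm_matSeriesMul (hLR : SuperCommute k par L R) (i j l m : Fin n)
    (r s : ℕ) :
    superComm k par (matSeriesMul L R) i j l m r s
      = ∑ P ∈ antidiagonal r, ∑ Q ∈ antidiagonal s,
          (leftPart k par L R i j l m P Q + rightPart k par L R i j l m P Q) := by
  rw [superComm, hLR.matSeriesMul_mul, hLR.matSeriesMul_mul, sum_comm (s := antidiagonal s),
    smul_sum, ← sum_sub_distrib]
  refine sum_congr rfl fun P _ => ?_
  rw [smul_sum, ← sum_sub_distrib]
  refine sum_congr rfl fun Q _ => ?_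
  rw [orderedProd, orderedProd]
  nth_rewrite 2 [sum_comm]
  simp only [leftPart, rightPart, smul_sum, ← sum_sub_distrib, ← sum_add_distrib]
  refine sum_congr rfl fun a _ => sum_congr rfl fun b _ => ?_
  have hsign : (-1 : k) ^ ((par i + par j) * (par l + par m))
        * (-1 : k) ^ ((par i + par a) * (par b + par m))
      = (-1 : k) ^ ((par l + par b) * (par a + par j))
        * (-1 : k) ^ ((par i + par a) * (par l + par b))
        * (-1 : k) ^ ((par a + par j) * (par b + par m)) := by
    simp only [← pow_add]
    exact neg_one_pow_eq_of_cast_eq (by push_cast; ring_nf; reduce_mod_char)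
  rw [smul_smul, hsign]
  simp only [superComm, sub_mul, mul_sub, smul_sub, smul_mul_assoc, mul_smul_comm, smul_smul,
    mul_assoc]
  module

lemma IsRTTDiff.leftPart_shift_sub (hL : IsRTTDiff k par L) (i j l m : Fin n) (P Q : ℕ × ℕ) :
    leftPart k par L R i j l m (P.1 + 1, P.2) Q - leftPart k par L R i j l m P (Q.1 + 1, Q.2)
      = ∑ a, ∑ b, ((-1 : k) ^ ((par l + par b) * (par a + par j))) •
          ((((-1 : k) ^ (par i * par a + par i * par l + par a * par l)) •
            (L l a P.1 * L i b Q.1 - L l a Q.1 * L i b P.1)) * (R a j P.2 * R b m Q.2)) := by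
  simp only [leftPart, ← sum_sub_distrib, ← smul_sub, ← sub_mul]
  exact sum_congr rfl fun a _ => sum_congr rfl fun b _ => by rw [hL i a l b P.1 Q.1]

lemma IsRTTDiff.rightPart_shift_sub (hR : IsRTTDiff k par R) (i j l m : Fin n) (P Q : ℕ × ℕ) :
    rightPart k par L R i j l m (P.1, P.2 + 1) Q - rightPart k par L R i j l m P (Q.1, Q.2 + 1)
      = ∑ a, ∑ b, ((-1 : k) ^ ((par l + par a) * (par b + par j)) *
            (-1 : k) ^ ((par i + par b) * (par l + par a))) •
          (L l a Q.1 * L i b P.1 * (((-1 : k) ^ (par b * par j + par b * par a + par j * par a)) •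
            (R a j P.2 * R b m Q.2 - R a j Q.2 * R b m P.2))) := by
  simp only [rightPart, ← sum_sub_distrib, ← smul_sub, ← mul_sub]
  rw [sum_comm]
  exact sum_congr rfl fun a _ => sum_congr rfl fun b _ => by rw [hR b j a m P.2 Q.2]

lemma leftPart_shift_add_rightPart_shift (hL : IsRTTDiff k par L) (hR : IsRTTDiff k par R)
    (i j l m : Fin n) (P Q : ℕ × ℕ) :
    (leftPart k par L R i j l m (P.1 + 1, P.2) Q - leftPart k par L R i j l m P (Q.1 + 1, Q.2))
      + (rightPart k par L R i j l m (P.1, P.2 + 1) Q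
        - rightPart k par L R i j l m P (Q.1, Q.2 + 1))
      = ((-1 : k) ^ (par i * par j + par i * par l + par j * par l)) •
          (orderedProd k par L R l j i m P Q - orderedProd k par L R l j i m Q P) := by
  rw [hL.leftPart_shift_sub, hR.rightPart_shift_sub, ← sum_add_distrib, orderedProd, orderedProd,
    ← sum_sub_distrib, smul_sum]
  refine sum_congr rfl fun a _ => ?_
  rw [← sum_add_distrib, ← sum_sub_distrib, smul_sum]
  refine sum_congr rfl fun b _ => ?_
  have hsign_left : (-1 : k) ^ ((par l + par b) * (par a + par j))
        * (-1 : k) ^ (par i * par a + par i * par l + par a * par l)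
      = (-1 : k) ^ (par i * par j + par i * par l + par j * par l)
        * (-1 : k) ^ ((par i + par b) * (par a + par j)) := by
    simp only [← pow_add]
    exact neg_one_pow_eq_of_cast_eq (by push_cast; ring_nf; reduce_mod_char)
  have hsign_right : (-1 : k) ^ ((par l + par a) * (par b + par j))
        * (-1 : k) ^ ((par i + par b) * (par l + par a))
        * (-1 : k) ^ (par b * par j + par b * par a + par j * par a)
      = (-1 : k) ^ (par i * par j + par i * par l + par j * par l)
        * (-1 : k) ^ ((par i + par b) * (par a + par j)) := by
    simp only [← pow_add]
    exact neg_one_pow_eq_of_cast_eq (by push_cast; ring_nf; reduce_mod_char)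
  simp only [sub_mul, mul_sub, smul_sub, smul_mul_assoc, mul_smul_comm, smul_smul]
  rw [hsign_left, hsign_right]
  simp only [mul_assoc]
  abel

theorem IsRTTDiff.matSeriesMul (hL0 : IsIdAtZero L) (hR0 : IsIdAtZero R)
    (hL : IsRTTDiff k par L) (hR : IsRTTDiff k par R) (hLR : SuperCommute k par L R) :
    IsRTTDiff k par (matSeriesMul L R) := by
  intro i j l m r s
  have hleft_fst : ∀ t Q, leftPart k par L R i j l m (0, t) Q = 0 := fun t Q => by
    simp only [leftPart, hL0.superComm_zero_left, zero_mul, smul_zero, sum_const_zero]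
  have hleft_snd : ∀ P t, leftPart k par L R i j l m P (0, t) = 0 := fun P t => by
    simp only [leftPart, hL0.superComm_zero_right, zero_mul, smul_zero, sum_const_zero]
  have hright_fst : ∀ t Q, rightPart k par L R i j l m (t, 0) Q = 0 := fun t Q => by
    simp only [rightPart, hR0.superComm_zero_left, mul_zero, smul_zero, sum_const_zero]
  have hright_snd : ∀ P t, rightPart k par L R i j l m P (t, 0) = 0 := fun P t => by
    simp only [rightPart, hR0.superComm_zero_right, mul_zero, smul_zero, sum_const_zero]
  rw [hLR.superComm_matSeriesMul, hLR.superComm_matSeriesMul, hLR.matSeriesMul_mul,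
    hLR.matSeriesMul_mul, sum_comm (s := antidiagonal s)]
  simp only [sum_add_distrib]
  rw [add_sub_add_comm,
    sum_antidiagonal_telescope_fst _ hleft_fst hleft_snd,
    sum_antidiagonal_telescope_snd _ hright_fst hright_snd,
    ← sum_add_distrib, ← sum_sub_distrib, smul_sum]
  refine sum_congr rfl fun P _ => ?_
  rw [← sum_add_distrib, ← sum_sub_distrib, smul_sum]
  exact sum_congr rfl fun Q _ => leftPart_shift_add_rightPart_shift hL hR i j l m P Q

theorem IsRTT.matSeriesMul (hL0 : IsIdAtZero L) (hR0 : IsIdAtZero R)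
    (hL : IsRTT k par L) (hR : IsRTT k par R) (hLR : SuperCommute k par L R) :
    IsRTT k par (matSeriesMul L R) :=
  (isRTT_iff_isRTTDiff (hL0.matSeriesMul hR0)).mpr <|
    ((isRTT_iff_isRTTDiff hL0).mp hL).matSeriesMul hL0 hR0 ((isRTT_iff_isRTTDiff hR0).mp hR) hLR

end RTT

section Presentation

variable {k : Type*} [Field k] {n : ℕ} {par : Fin n → ℕ}

lemma exists_algHom_yangian {B : Type*} [Ring B] [Algebra k B] {X : Fin n → Fin n → ℕ → B}
    (h0 : IsIdAtZero X) (h : IsRTT k par X) :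
    ∃ φ : Yangian k n par →ₐ[k] B, ∀ i j r, φ (yT k n par i j r) = X i j r := by
  refine ⟨RingQuot.liftAlgHom k ⟨FreeAlgebra.lift k fun g => X g.1 g.2.1 g.2.2, ?_⟩,
    fun i j r => ?_⟩
  · intro x y hxy
    induction hxy with
    | unit i j => simpa [yX] using h0 i j
    | rtt i j l m r s =>
      simp only [yX, map_sub, map_mul, map_smul, map_sum, FreeAlgebra.lift_ι_apply]
      exact h i j l m r s
  · rw [yT, RingQuot.liftAlgHom_mkAlgHom_apply, yX, FreeAlgebra.lift_ι_apply]

lemma isIdAtZero_tL : IsIdAtZero (tL k n par) := fun i j => by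
  rw [tL, RingQuot.mkAlgHom_rel k (YYRel.left_unit (k := k) (par := par) i j)]
  split_ifs <;> simp

lemma isIdAtZero_tR : IsIdAtZero (tR k n par) := fun i j => by
  rw [tR, RingQuot.mkAlgHom_rel k (YYRel.right_unit (k := k) (par := par) i j)]
  split_ifs <;> simp

lemma isRTT_tL : IsRTT k par (tL k n par) := fun i j l m r s => by
  have h := RingQuot.mkAlgHom_rel k (YYRel.left_rtt (k := k) (par := par) i j l m r s)
  simp only [map_sub, map_mul, map_smul, map_sum] at h
  exact h

lemma isRTT_tR : IsRTT k par (tR k n par) := fun i j l m r s => by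
  have h := RingQuot.mkAlgHom_rel k (YYRel.right_rtt (k := k) (par := par) i j l m r s)
  simp only [map_sub, map_mul, map_smul, map_sum] at h
  exact h

lemma superCommute_tL_tR : SuperCommute k par (tL k n par) (tR k n par) :=
  fun i j l m r s => by
    have h := RingQuot.mkAlgHom_rel k (YYRel.cross (k := k) (par := par) i j l m r s)
    simp only [map_mul, map_smul] at h
    exact h

end Presentation

theorem statement8_general (k : Type*) [Field k]
    (M N : ℕ) (par : Fin (M + N) → ℕ) :
    ∃ Δ : Yangian k (M + N) par →ₐ[k] YangianTensor k (M + N) par,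
      ∀ (i j : Fin (M + N)) (r : ℕ),
        Δ (yT k (M + N) par i j r)
          = ∑ s ∈ Finset.range (r + 1), ∑ m : Fin (M + N),
              tL k (M + N) par i m (r - s) * tR k (M + N) par m j s := by
  obtain ⟨Δ, hΔ⟩ := exists_algHom_yangian
    (X := matSeriesMul (tL k (M + N) par) (tR k (M + N) par))
    (isIdAtZero_tL.matSeriesMul isIdAtZero_tR)
    (isRTT_tL.matSeriesMul isIdAtZero_tL isIdAtZero_tR isRTT_tR superCommute_tL_tR)
  refine ⟨Δ, fun i j r => ?_⟩
  rw [hΔ, matSeriesMul, ← Nat.sum_antidiagonal_swap]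
  exact Nat.sum_antidiagonal_eq_sum_range_succ
    (fun s q => ∑ m, tL k (M + N) par i m q * tR k (M + N) par m j s) r

/-- the comultiplication
`Δ(t_{i,j}^{(r)}) = Σ_{s=0}^r Σ_{m=1}^{M+N} t_{i,m}^{(r-s)} ⊗ t_{m,j}^{(s)}`
extends to a well-defined superalgebra homomorphism
`Δ : Y_{M|N} → Y_{M|N} ⊗ Y_{M|N}` (graded tensor product). -/
theorem statement8 (k : Type*) [Field k]
    (M N : ℕ) (par : Fin (M + N) → ℕ) (hpar : ∀ i, par i ≤ 1)
    (hM : (Finset.univ.filter fun i => par i = 0).card = M) :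
    ∃ Δ : Yangian k (M + N) par →ₐ[k] YangianTensor k (M + N) par,
      ∀ (i j : Fin (M + N)) (r : ℕ),
        Δ (yT k (M + N) par i j r)
          = ∑ s ∈ Finset.range (r + 1), ∑ m : Fin (M + N),
              tL k (M + N) par i m (r - s) * tR k (M + N) par m j s :=
  statement8_general k M N par
end

section
/- In the super Yangian Y_{M|N}, the entries t'_{i,j}(u) of the inverse matrix T(u)^{-1} satisfy (u-v)[t_{i,j}(u), t'_{k,l}(v)] = (-1)^{|i||j|+|i||k|+|j||k|}(δ_{k,j} Σ_{s=1}^{M+N} t_{i,s}(u) t'_{s,l}(v) - δ_{i,l} Σ_{s=1}^{M+N} t'_{k,s}(v) t_{s,j}(u)). -/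
/-- The supercommutator `[x,y] = x·y - (-1)^ε · y·x`, `ε` being the product of parities. -/
def sbr {A : Type*} [Ring A] (ε : ℕ) (x y : A) : A := x * y - (-1 : A) ^ ε * (y * x)

/-- Coefficient of `u^{-r}` in the product of the series with coefficients `f` and `g`. -/
def conv {A : Type*} [Ring A] (f g : ℕ → A) (r : ℕ) : A :=
  ∑ x ∈ Finset.HasAntidiagonal.antidiagonal r, f x.1 * g x.2

/-!
Fix `i, j, r` and work with matrices over `A⟦X⟧`, where `X` stands for `v⁻¹`, so that
`T = seriesMatrix t` and `T' = seriesMatrix t'` are mutually inverse. With the sign matrix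
`S = diag((-1)^{(|i|+|j|)|a|})`, supercommuting a scalar `ξ` with all entries of `Y` is the
twisted commutator `ξY - SYSξ`, which obeys the Leibniz rule `[ξ, YZ] = [ξ, Y]Z + SYS[ξ, Z]`.
Applied to `T'T = 1` it gives `[ξ, T'] = -ST'S[ξ, T]T'`. Take `ξ = X·t_{ij}^{(r+1)} - t_{ij}^{(r)}`:
the coefficient of `X^{s+1}` in `[ξ, Y]` is the coefficient of `u^{-r}v^{-s}` in `(u-v)[t_{ij}(u), Y(v)]`.
The RTT relation reads `[ξ, T] = X·D(A₀E_{ji}T - TE_{ji}A₀)` with `A₀ = (t_{ab}^{(r)})` and `D` a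
sign matrix such that `SD` is central; `TT' = T'T = 1` then collapse `[ξ, T']` to
`X·D(E_{ji}A₀T' - T'A₀E_{ji})`, whose `(l, m)` entry is the claimed identity.
-/

open PowerSeries Matrix

section TwistedCommutator

variable {R : Type*} [Ring R]

def twistedComm (S X Y : R) : R := X * Y - S * Y * S * X

theorem twistedComm_mul {S : R} (hS : S * S = 1) (X Y Z : R) :
    twistedComm S X (Y * Z) = twistedComm S X Y * Z + S * Y * S * twistedComm S X Z := by
  have hSS : S * Y * S * (S * Z * S * X) = S * (Y * Z) * S * X := by
    simp only [← mul_assoc]; simp only [mul_assoc, hS, one_mul]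
  simp only [twistedComm, sub_mul, mul_sub, hSS]
  noncomm_ring

theorem twistedComm_one {S : R} (hS : S * S = 1) (X : R) : twistedComm S X 1 = 0 := by
  simp [twistedComm, hS]

theorem twistedComm_eq_of_mul_eq_one {S : R} (hS : S * S = 1) (X : R) {Y Z : R}
    (hYZ : Y * Z = 1) (hZY : Z * Y = 1) :
    twistedComm S X Z = -(S * Z * S * twistedComm S X Y * Z) := by
  have h := twistedComm_mul hS X Z Y
  rw [hZY, twistedComm_one hS] at h
  calc twistedComm S X Z = twistedComm S X Z * Y * Z := by rw [mul_assoc, hYZ, mul_one]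
    _ = -(S * Z * S * twistedComm S X Y * Z) := by
      rw [eq_neg_of_add_eq_zero_left h.symm, neg_mul]

end TwistedCommutator

section Series

variable {A : Type*} [Ring A]

theorem sbr_zero_right (ε : ℕ) (x : A) : sbr ε x 0 = 0 := by simp [sbr]

theorem sbr_one_right {ε : ℕ} (hε : Even ε) (x : A) : sbr ε x 1 = 0 := by
  simp [sbr, hε.neg_one_pow]

theorem mk_conv (f g : ℕ → A) : mk (conv f g) = mk f * mk g := by
  ext n; simp [conv, coeff_mul]

theorem PowerSeries.coeff_neg_one_pow_mul (k n : ℕ) (φ : A⟦X⟧) :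
    coeff n ((-1) ^ k * φ) = (-1) ^ k * coeff n φ := by
  rw [show (-1 : A⟦X⟧) ^ k = C ((-1) ^ k) by simp, coeff_C_mul]

theorem mk_sbr (ε : ℕ) (x : A) (f : ℕ → A) :
    mk (fun n => sbr ε x (f n)) = C x * mk f - (-1) ^ ε * mk f * C x := by
  have hsign : (-1 : A⟦X⟧) ^ ε = C ((-1) ^ ε) := by simp
  rw [hsign]
  ext n
  simp only [sbr, coeff_mk, map_sub, coeff_C_mul, coeff_mul_C, mul_assoc]

end Series

section SignMatrix

variable {ι : Type*} [DecidableEq ι] {R : Type*} [Ring R]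

def signDiag (e : ι → ℕ) : Matrix ι ι R := diagonal fun a => (-1) ^ e a

theorem signDiag_eq_of_add_two_mul {e e' : ι → ℕ} (k : ι → ℕ)
    (h : ∀ a, e a = e' a + 2 * k a) : (signDiag e : Matrix ι ι R) = signDiag e' := by
  simp [signDiag, h, pow_add, pow_mul]

variable [Fintype ι]

theorem signDiag_mul_signDiag (e e' : ι → ℕ) :
    (signDiag e * signDiag e' : Matrix ι ι R) = signDiag (e + e') := by
  simp [signDiag, pow_add]

theorem signDiag_mul_self (e : ι → ℕ) : (signDiag e * signDiag e : Matrix ι ι R) = 1 := by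
  rw [signDiag_mul_signDiag, signDiag_eq_of_add_two_mul (e' := 0) e fun a => by simp [two_mul]]
  simp [signDiag]

theorem twistedComm_signDiag_scalar_apply (e : ι → ℕ) (ξ : R) (Y : Matrix ι ι R) (a b : ι) :
    twistedComm (signDiag e) (scalar ι ξ) Y a b
      = ξ * Y a b - (-1) ^ (e a + e b) * Y a b * ξ := by
  simp only [twistedComm, signDiag, scalar_apply, Matrix.sub_apply, diagonal_mul, mul_diagonal,
    diagonal_mul_diagonal, mul_assoc]
  rw [pow_add, mul_assoc, ← mul_assoc (Y a b), ← ((Commute.neg_one_left _).pow_left _).eq,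
    mul_assoc]

end SignMatrix

section SingleMatrix

variable {ι : Type*} [Fintype ι] [DecidableEq ι] {R : Type*} [Ring R]

theorem Matrix.mul_single_one_apply (M : Matrix ι ι R) (i j a b : ι) :
    (M * single j i (1 : R)) a b = if i = b then M a j else 0 := by
  by_cases h : i = b <;> simp [mul_apply, single, h]

theorem Matrix.single_one_mul_apply (M : Matrix ι ι R) (i j a b : ι) :
    (single j i (1 : R) * M) a b = if a = j then M i b else 0 := by
  rcases eq_or_ne a j with rfl | h
  · simp [mul_apply, single]
  · simp [mul_apply, single, h, h.symm]

theorem Matrix.mul_single_one_mul_apply (M N : Matrix ι ι R) (i j a b : ι) :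
    (M * single j i (1 : R) * N) a b = M a j * N i b := by
  rw [mul_apply, Finset.sum_eq_single i] <;> simp +contextual

end SingleMatrix

section SeriesMatrix

variable {ι : Type*} [Fintype ι] [DecidableEq ι] {A : Type*} [Ring A]

def seriesMatrix (t : ι → ι → ℕ → A) : Matrix ι ι A⟦X⟧ := of fun a b => mk (t a b)

noncomputable def constMatrix (t : ι → ι → ℕ → A) (r : ℕ) : Matrix ι ι A⟦X⟧ :=
  of fun a b => C (t a b r)

theorem seriesMatrix_mul_eq_one {t t' : ι → ι → ℕ → A}
    (h : ∀ i j r, ∑ w, conv (t i w) (t' w j) r = if i = j ∧ r = 0 then 1 else 0) :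
    seriesMatrix t * seriesMatrix t' = 1 := by
  ext a b n
  simp only [mul_apply, seriesMatrix, of_apply, ← mk_conv, map_sum, coeff_mk, h, one_apply]
  split_ifs <;> simp_all

theorem twistedComm_seriesMatrix_apply (e : ι → ℕ) (x₀ x₁ : A) (y : ι → ι → ℕ → A) (a b : ι) :
    twistedComm (signDiag e) (scalar ι (X * C x₁ - C x₀)) (seriesMatrix y) a b
      = X * mk (fun n => sbr (e a + e b) x₁ (y a b n))
          - mk (fun n => sbr (e a + e b) x₀ (y a b n)) := by
  rw [twistedComm_signDiag_scalar_apply, mk_sbr, mk_sbr, mul_sub (_ * _)]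
  have hX : (-1) ^ (e a + e b) * seriesMatrix y a b * (X * C x₁)
      = X * ((-1) ^ (e a + e b) * mk (y a b) * C x₁) := by
    rw [← mul_assoc, (commute_X _).eq, mul_assoc X]; rfl
  rw [hX]
  simp only [seriesMatrix, of_apply]
  noncomm_ring

end SeriesMatrix

section SuperYangian

variable {ι : Type*} [Fintype ι] [DecidableEq ι] {A : Type*} [Ring A]

def RTTRelation (par : ι → ℕ) (t : ι → ι → ℕ → A) : Prop :=
  ∀ i j l m : ι, ∀ r s : ℕ,
    sbr ((par i + par j) * (par l + par m)) (t i j (r + 1)) (t l m s)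
        - sbr ((par i + par j) * (par l + par m)) (t i j r) (t l m (s + 1))
      = (-1 : A) ^ (par i * par j + par i * par l + par j * par l) *
          (t l j r * t i m s - t l j s * t i m r)

theorem RTTRelation.twistedComm_seriesMatrix {par : ι → ℕ} {t : ι → ι → ℕ → A}
    (hrtt : RTTRelation par t) (h0 : ∀ i j, t i j 0 = if i = j then 1 else 0) (i j : ι) (r : ℕ) :
    twistedComm (signDiag fun a => (par i + par j) * par a)
        (scalar ι (X * C (t i j (r + 1)) - C (t i j r))) (seriesMatrix t)
      = scalar ι X * (signDiag (fun a => par i * par j + par i * par a + par j * par a) *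
          (constMatrix t r * single j i 1 * seriesMatrix t
            - seriesMatrix t * single j i 1 * constMatrix t r)) := by
  ext a b n
  rw [twistedComm_seriesMatrix_apply, ← mul_add]
  cases n with
  | zero =>
    rw [scalar_apply, diagonal_mul, coeff_zero_X_mul, map_sub, coeff_zero_X_mul, coeff_mk, h0]
    split_ifs with hab
    · subst hab
      simpa using sbr_one_right ((Even.add_self (par a)).mul_left _) (t i j r)
    · simp [sbr_zero_right]
  | succ n =>
    rw [map_sub, coeff_succ_X_mul, coeff_mk, coeff_mk, hrtt, scalar_apply, diagonal_mul,
      coeff_succ_X_mul]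
    simp [signDiag, coeff_neg_one_pow_mul, mul_single_one_mul_apply, seriesMatrix, constMatrix]

theorem RTTRelation.twistedComm_inv_seriesMatrix {par : ι → ℕ} {t t' : ι → ι → ℕ → A}
    (hrtt : RTTRelation par t) (h0 : ∀ i j, t i j 0 = if i = j then 1 else 0)
    (hinv : ∀ i j r, ∑ w, conv (t i w) (t' w j) r = if i = j ∧ r = 0 then 1 else 0)
    (hinv' : ∀ i j r, ∑ w, conv (t' i w) (t w j) r = if i = j ∧ r = 0 then 1 else 0)
    (i j : ι) (r : ℕ) :
    twistedComm (signDiag fun a => (par i + par j) * par a)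
        (scalar ι (X * C (t i j (r + 1)) - C (t i j r))) (seriesMatrix t')
      = scalar ι X * (signDiag (fun a => par i * par j + par i * par a + par j * par a) *
          (single j i 1 * constMatrix t r * seriesMatrix t'
            - seriesMatrix t' * constMatrix t r * single j i 1)) := by
  set S : Matrix ι ι A⟦X⟧ := signDiag fun a => (par i + par j) * par a
  set D : Matrix ι ι A⟦X⟧ := signDiag fun a => par i * par j + par i * par a + par j * par a
  set σ : Matrix ι ι A⟦X⟧ := signDiag fun _ => par i * par j
  set T := seriesMatrix t
  set T' := seriesMatrix t'
  set A₀ := constMatrix t r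
  set E : Matrix ι ι A⟦X⟧ := single j i 1
  have hS : S * S = 1 := signDiag_mul_self _
  have hT : T * T' = 1 := seriesMatrix_mul_eq_one hinv
  have hT' : T' * T = 1 := seriesMatrix_mul_eq_one hinv'
  have hX (Y : Matrix ι ι A⟦X⟧) : Commute (scalar ι X) Y :=
    scalar_commute _ (fun φ => (commute_X φ).symm) Y
  have hσ (Y : Matrix ι ι A⟦X⟧) : Commute σ Y :=
    scalar_commute _ (fun φ => (Commute.neg_one_left φ).pow_left _) Y
  have hSD : S * D = σ := by
    rw [signDiag_mul_signDiag]
    exact signDiag_eq_of_add_two_mul (fun a => par i * par a + par j * par a) fun a => by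
      simp only [Pi.add_apply]; ring
  have hSσ : S * σ = D := by rw [← hSD, ← mul_assoc, hS, one_mul]
  have hN : T' * (A₀ * E * T - T * E * A₀) * T' = T' * A₀ * E - E * A₀ * T' := by
    simp only [mul_sub, sub_mul, ← mul_assoc, hT', one_mul]
    simp only [mul_assoc, hT, mul_one]
  rw [twistedComm_eq_of_mul_eq_one hS _ hT hT', hrtt.twistedComm_seriesMatrix h0]
  calc -(S * T' * S * (scalar ι X * (D * (A₀ * E * T - T * E * A₀))) * T')
      = scalar ι X * -(S * T' * (S * D) * (A₀ * E * T - T * E * A₀) * T') := by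
        rw [← mul_assoc (S * T' * S), ← (hX _).eq]; simp only [mul_assoc, mul_neg]
    _ = scalar ι X * -(S * σ * (T' * (A₀ * E * T - T * E * A₀) * T')) := by
        rw [hSD, mul_assoc S T' σ, ← (hσ T').eq]; simp only [mul_assoc]
    _ = scalar ι X * (D * (E * A₀ * T' - T' * A₀ * E)) := by
        rw [hSσ, hN, ← mul_neg, neg_sub]

end SuperYangian

theorem statement9_general {A : Type*} [Ring A] (M N : ℕ)
    (par : Fin (M + N) → ℕ)
    (t t' : Fin (M + N) → Fin (M + N) → ℕ → A)
    (h0 : ∀ i j, t i j 0 = if i = j then 1 else 0)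
    (hrtt : ∀ i j l m : Fin (M + N), ∀ r s : ℕ,
      sbr ((par i + par j) * (par l + par m)) (t i j (r + 1)) (t l m s)
          - sbr ((par i + par j) * (par l + par m)) (t i j r) (t l m (s + 1))
        = (-1 : A) ^ (par i * par j + par i * par l + par j * par l) *
            (t l j r * t i m s - t l j s * t i m r))
    (hinv : ∀ (i j : Fin (M + N)) (r : ℕ),
      ∑ w : Fin (M + N), conv (t i w) (t' w j) r = if i = j ∧ r = 0 then 1 else 0)
    (hinv' : ∀ (i j : Fin (M + N)) (r : ℕ),
      ∑ w : Fin (M + N), conv (t' i w) (t w j) r = if i = j ∧ r = 0 then 1 else 0) :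
    ∀ i j l m : Fin (M + N), ∀ r s : ℕ,
      sbr ((par i + par j) * (par l + par m)) (t i j (r + 1)) (t' l m s)
          - sbr ((par i + par j) * (par l + par m)) (t i j r) (t' l m (s + 1))
        = (-1 : A) ^ (par i * par j + par i * par l + par j * par l) *
            ((if l = j then ∑ w : Fin (M + N), t i w r * t' w m s else 0) -
              (if i = m then ∑ w : Fin (M + N), t' l w s * t w j r else 0)) := by
  intro i j l m r s
  have h := congrArg (fun Y => coeff (s + 1) (Y l m))
    (RTTRelation.twistedComm_inv_seriesMatrix hrtt h0 hinv hinv' i j r)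
  rw [twistedComm_seriesMatrix_apply, ← mul_add, map_sub, coeff_succ_X_mul, coeff_mk,
    coeff_mk] at h
  rw [h, scalar_apply, diagonal_mul, coeff_succ_X_mul, signDiag, diagonal_mul,
    coeff_neg_one_pow_mul, Matrix.sub_apply, mul_assoc, single_one_mul_apply,
    mul_single_one_apply]
  split_ifs <;> simp [mul_apply, seriesMatrix, constMatrix, map_sum]

/-- in the super Yangian `Y_{M|N}` (realized by any family `t i j r` in a
ring satisfying the series-form RTT relations with `t i j 0 = δ_{ij}`), the entries
`t'_{i,j}(u)` of the inverse matrix `T(u)^{-1}` satisfy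
`(u-v)[t_{i,j}(u), t'_{l,m}(v)] = (-1)^{|i||j|+|i||l|+|j||l|}
  (δ_{l,j} Σ_w t_{i,w}(u) t'_{w,m}(v) - δ_{i,m} Σ_w t'_{l,w}(v) t_{w,j}(u))`,
stated coefficientwise at `u^{-r} v^{-s}`. -/
theorem statement9 {A : Type*} [Ring A] (M N : ℕ)
    (par : Fin (M + N) → ℕ) (hpar : ∀ i, par i ≤ 1)
    (hM : (Finset.univ.filter fun i => par i = 0).card = M)
    (t t' : Fin (M + N) → Fin (M + N) → ℕ → A)
    (h0 : ∀ i j, t i j 0 = if i = j then 1 else 0)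
    (hrtt : ∀ i j l m : Fin (M + N), ∀ r s : ℕ,
      sbr ((par i + par j) * (par l + par m)) (t i j (r + 1)) (t l m s)
          - sbr ((par i + par j) * (par l + par m)) (t i j r) (t l m (s + 1))
        = (-1 : A) ^ (par i * par j + par i * par l + par j * par l) *
            (t l j r * t i m s - t l j s * t i m r))
    (hinv : ∀ (i j : Fin (M + N)) (r : ℕ),
      ∑ w : Fin (M + N), conv (t i w) (t' w j) r = if i = j ∧ r = 0 then 1 else 0)
    (hinv' : ∀ (i j : Fin (M + N)) (r : ℕ),
      ∑ w : Fin (M + N), conv (t' i w) (t w j) r = if i = j ∧ r = 0 then 1 else 0) :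
    ∀ i j l m : Fin (M + N), ∀ r s : ℕ,
      sbr ((par i + par j) * (par l + par m)) (t i j (r + 1)) (t' l m s)
          - sbr ((par i + par j) * (par l + par m)) (t i j r) (t' l m (s + 1))
        = (-1 : A) ^ (par i * par j + par i * par l + par j * par l) *
            ((if l = j then ∑ w : Fin (M + N), t i w r * t' w m s else 0) -
              (if i = m then ∑ w : Fin (M + N), t' l w s * t w j r else 0)) :=
  statement9_general M N par t t' h0 hrtt hinv hinv'
end

section
/- Let μ = (μ_1, μ_2, μ_3). In Y_μ, the generators satisfy [D_{1;i,j}(u), F_{2;h,k}(v)] = 0 for all 1 ≤ i,j ≤ μ_1, 1 ≤ h ≤ μ_3, 1 ≤ k ≤ μ_2, and [F_{1;i,j}(u), D'_{3;h,k}(v)] = 0 for all 1 ≤ i ≤ μ_2, 1 ≤ j ≤ μ_1, 1 ≤ h,k ≤ μ_3. -/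
section

variable (μ1 μ2 μ3 : ℕ)

/-- Embedding of the first block. -/
def e1 (i : Fin μ1) : Fin (μ1 + μ2 + μ3) := Fin.castAdd μ3 (Fin.castAdd μ2 i)

/-- Embedding of the second block. -/
def e2 (i : Fin μ2) : Fin (μ1 + μ2 + μ3) := Fin.castAdd μ3 (Fin.natAdd μ1 i)

/-- Embedding of the third block. -/
def e3 (i : Fin μ3) : Fin (μ1 + μ2 + μ3) := Fin.natAdd (μ1 + μ2) i

variable {A : Type*} [Ring A] (par : Fin (μ1 + μ2 + μ3) → ℕ)
  (t : Fin (μ1 + μ2 + μ3) → Fin (μ1 + μ2 + μ3) → ℕ → A)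
  (D1 D1' : Fin μ1 → Fin μ1 → ℕ → A) (D2 D2' : Fin μ2 → Fin μ2 → ℕ → A)
  (D3 D3' : Fin μ3 → Fin μ3 → ℕ → A)
  (E1 : Fin μ1 → Fin μ2 → ℕ → A) (E2 : Fin μ2 → Fin μ3 → ℕ → A)
  (E13 : Fin μ1 → Fin μ3 → ℕ → A)
  (F1 : Fin μ2 → Fin μ1 → ℕ → A) (F2 : Fin μ3 → Fin μ2 → ℕ → A)
  (F31 : Fin μ3 → Fin μ1 → ℕ → A)

/-- The hypotheses: `t` satisfies the series-form RTT relations of the super Yangian with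
`t_{i,j}^{(0)} = δ_{ij}`, and the `D`'s (with two-sided inverses `D'`), `E`'s and `F`'s
form the Gauss decomposition `T(u) = F(u) D(u) E(u)` relative to `μ = (μ1, μ2, μ3)`,
written out blockwise and coefficientwise. -/
structure GaussData3 : Prop where
  h0 : ∀ i j, t i j 0 = if i = j then 1 else 0
  hrtt : ∀ i j l m : Fin (μ1 + μ2 + μ3), ∀ r s : ℕ,
    sbr ((par i + par j) * (par l + par m)) (t i j (r + 1)) (t l m s)
        - sbr ((par i + par j) * (par l + par m)) (t i j r) (t l m (s + 1))
      = (-1 : A) ^ (par i * par j + par i * par l + par j * par l) *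
          (t l j r * t i m s - t l j s * t i m r)
  hE10 : ∀ i j, E1 i j 0 = 0
  hE20 : ∀ i j, E2 i j 0 = 0
  hE130 : ∀ i j, E13 i j 0 = 0
  hF10 : ∀ i j, F1 i j 0 = 0
  hF20 : ∀ i j, F2 i j 0 = 0
  hF310 : ∀ i j, F31 i j 0 = 0
  hD1inv : ∀ i j r, ∑ p : Fin μ1, conv (D1 i p) (D1' p j) r
    = if i = j ∧ r = 0 then 1 else 0
  hD1inv' : ∀ i j r, ∑ p : Fin μ1, conv (D1' i p) (D1 p j) r
    = if i = j ∧ r = 0 then 1 else 0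
  hD2inv : ∀ i j r, ∑ p : Fin μ2, conv (D2 i p) (D2' p j) r
    = if i = j ∧ r = 0 then 1 else 0
  hD2inv' : ∀ i j r, ∑ p : Fin μ2, conv (D2' i p) (D2 p j) r
    = if i = j ∧ r = 0 then 1 else 0
  hD3inv : ∀ i j r, ∑ p : Fin μ3, conv (D3 i p) (D3' p j) r
    = if i = j ∧ r = 0 then 1 else 0
  hD3inv' : ∀ i j r, ∑ p : Fin μ3, conv (D3' i p) (D3 p j) r
    = if i = j ∧ r = 0 then 1 else 0
  hT11 : ∀ i j r, t (e1 μ1 μ2 μ3 i) (e1 μ1 μ2 μ3 j) r = D1 i j r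
  hT12 : ∀ i j r, t (e1 μ1 μ2 μ3 i) (e2 μ1 μ2 μ3 j) r
    = ∑ p : Fin μ1, conv (D1 i p) (E1 p j) r
  hT13 : ∀ i j r, t (e1 μ1 μ2 μ3 i) (e3 μ1 μ2 μ3 j) r
    = ∑ p : Fin μ1, conv (D1 i p) (E13 p j) r
  hT21 : ∀ i j r, t (e2 μ1 μ2 μ3 i) (e1 μ1 μ2 μ3 j) r
    = ∑ p : Fin μ1, conv (F1 i p) (D1 p j) r
  hT22 : ∀ i j r, t (e2 μ1 μ2 μ3 i) (e2 μ1 μ2 μ3 j) r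
    = (∑ p : Fin μ1, ∑ q : Fin μ1, conv (F1 i p) (conv (D1 p q) (E1 q j)) r)
      + D2 i j r
  hT23 : ∀ i j r, t (e2 μ1 μ2 μ3 i) (e3 μ1 μ2 μ3 j) r
    = (∑ p : Fin μ1, ∑ q : Fin μ1, conv (F1 i p) (conv (D1 p q) (E13 q j)) r)
      + ∑ p : Fin μ2, conv (D2 i p) (E2 p j) r
  hT31 : ∀ i j r, t (e3 μ1 μ2 μ3 i) (e1 μ1 μ2 μ3 j) r
    = ∑ p : Fin μ1, conv (F31 i p) (D1 p j) r
  hT32 : ∀ i j r, t (e3 μ1 μ2 μ3 i) (e2 μ1 μ2 μ3 j) r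
    = (∑ p : Fin μ1, ∑ q : Fin μ1, conv (F31 i p) (conv (D1 p q) (E1 q j)) r)
      + ∑ p : Fin μ2, conv (F2 i p) (D2 p j) r
  hT33 : ∀ i j r, t (e3 μ1 μ2 μ3 i) (e3 μ1 μ2 μ3 j) r
    = (∑ p : Fin μ1, ∑ q : Fin μ1, conv (F31 i p) (conv (D1 p q) (E13 q j)) r)
      + (∑ p : Fin μ2, ∑ q : Fin μ2, conv (F2 i p) (conv (D2 p q) (E2 q j)) r)
      + D3 i j r

end


/-!
Write `T(u) = ∑ t⁽ʳ⁾ u⁻ʳ` as a matrix of power series in `X = u⁻¹`. The Gauss decomposition makes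
`T` a unit with `T⁻¹ = E⁻¹ D⁻¹ F⁻¹`, whose third block row is `(⋯, -D₃' F₂, D₃')`.

For `w ≠ j` and `i ≠ c`, the coefficient `t_{ij}⁽ʳ⁾` supercommutes with `t'_{wc}(v)`: the
super-derivation `δ_r = [t_{ij}⁽ʳ⁾, ·]` satisfies `δ_r(T⁻¹) = -T⁻¹ δ_r(T) T⁻¹`, and the RTT relation
reads `X δ_{r+1}(T) = δ_r(T) + X ρ`, where the `(w, c)` entry of `T⁻¹ ρ T⁻¹` (with signs) vanishes
because `w ≠ j` and `i ≠ c`. Hence `δ_r(t'_{wc}) = X δ_{r+1}(t'_{wc}) = X² δ_{r+2}(t'_{wc}) = ⋯`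
is zero.

So `D₁` and `t_{21} = F₁ D₁` supercommute with `D₃'`, and `D₁` with `D₃' F₂`. Passing to inverses,
`D₁` supercommutes with `D₃`, hence with `F₂ = D₃ · D₃' F₂`; and `D₃'` with `D₁'`, hence with
`F₁ = F₁ D₁ · D₁'`.
-/

open PowerSeries Matrix

namespace SuperYangian

section Supercommutator

variable {B : Type*} [Ring B]

lemma neg_one_pow_congr {a b : ℕ} (h : a % 2 = b % 2) : (-1 : B) ^ a = (-1) ^ b := by
  rw [neg_one_pow_eq_pow_mod_two, h, ← neg_one_pow_eq_pow_mod_two]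

lemma sbr_congr {a b : ℕ} (h : a % 2 = b % 2) (x y : B) : sbr a x y = sbr b x y := by
  rw [sbr, sbr, neg_one_pow_congr h]

@[simp] lemma sbr_zero_right (ε : ℕ) (x : B) : sbr ε x 0 = 0 := by simp [sbr]

lemma sbr_one_right {ε : ℕ} (h : Even ε) (x : B) : sbr ε x 1 = 0 := by
  simp [sbr, h.neg_one_pow]

lemma sbr_sum_right {κ : Type*} (S : Finset κ) (ε : ℕ) (x : B) (f : κ → B) :
    sbr ε x (∑ b ∈ S, f b) = ∑ b ∈ S, sbr ε x (f b) := by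
  simp only [sbr, Finset.mul_sum, Finset.sum_mul, Finset.sum_sub_distrib]

lemma sbr_neg_right (ε : ℕ) (x y : B) : sbr ε x (-y) = -sbr ε x y := by
  simp only [sbr, mul_neg, neg_mul, neg_sub, sub_neg_eq_add]; abel

lemma sbr_mul_right {ε ε₁ ε₂ : ℕ} (h : (ε₁ + ε₂) % 2 = ε % 2) (x y z : B) :
    sbr ε x (y * z) = sbr ε₁ x y * z + (-1) ^ ε₁ * (y * sbr ε₂ x z) := by
  have hc : y * (-1 : B) ^ ε₂ = (-1) ^ ε₂ * y := ((Commute.neg_one_right y).pow_right ε₂).eq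
  rw [← sbr_congr h, sbr, sbr, sbr, pow_add, mul_sub y, ← mul_assoc y ((-1) ^ ε₂), hc]
  simp only [mul_sub, sub_mul, mul_assoc]
  abel

lemma sbr_eq_zero_swap {ε : ℕ} {x y : B} (h : sbr ε x y = 0) : sbr ε y x = 0 := by
  rw [sbr, sub_eq_zero] at h
  rw [sbr, h, ← mul_assoc, ← pow_add, ← two_mul, pow_mul, neg_one_sq, one_pow, one_mul, sub_self]

lemma mul_add_add_mul_add_mod_two (π a b c : ℕ) :
    (π * (a + b) + π * (b + c)) % 2 = π * (a + c) % 2 := by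
  have : π * (a + b) + π * (b + c) = π * (a + c) + 2 * (π * b) := by ring
  omega

end Supercommutator

section Supercommutes

variable {B : Type*} [Ring B] {α β γ : Type*}

/-- `x` has parity `π` and the entry `M a b` has parity `ρ a + τ b`. -/
def Supercommutes (π : ℕ) (x : B) (ρ : α → ℕ) (τ : β → ℕ) (M : Matrix α β B) : Prop :=
  ∀ a b, sbr (π * (ρ a + τ b)) x (M a b) = 0

variable {π : ℕ} {x : B}

lemma sbr_mul_apply [Fintype β] (ρ : α → ℕ) (σ : β → ℕ) (τ : γ → ℕ) (M : Matrix α β B)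
    (N : Matrix β γ B) (a : α) (c : γ) :
    sbr (π * (ρ a + τ c)) x ((M * N) a c) = ∑ b, (sbr (π * (ρ a + σ b)) x (M a b) * N b c +
      (-1) ^ (π * (ρ a + σ b)) * (M a b * sbr (π * (σ b + τ c)) x (N b c))) := by
  rw [mul_apply, sbr_sum_right]
  exact Finset.sum_congr rfl fun b _ => sbr_mul_right (mul_add_add_mul_add_mod_two ..) ..

lemma Supercommutes.mul [Fintype β] {ρ : α → ℕ} {σ : β → ℕ} {τ : γ → ℕ} {M : Matrix α β B}
    {N : Matrix β γ B} (hM : Supercommutes π x ρ σ M) (hN : Supercommutes π x σ τ N) :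
    Supercommutes π x ρ τ (M * N) := fun a c => by
  simp [sbr_mul_apply ρ σ τ, hM a, hN _ c]

lemma sbr_one_apply [DecidableEq α] (ρ : α → ℕ) (a b : α) :
    sbr (π * (ρ a + ρ b)) x ((1 : Matrix α α B) a b) = 0 := by
  rcases eq_or_ne a b with rfl | hab
  · rw [one_apply_eq]
    exact sbr_one_right ⟨π * ρ a, by ring⟩ x
  · simp [one_apply_ne hab]

/-- `δ(M⁻¹) = -M⁻¹ δ(M) M⁻¹` for the super-derivation `δ = [x, ·]`. -/
lemma sbr_inverse_apply [Fintype α] [DecidableEq α] (ρ : α → ℕ) {M M' : Matrix α α B}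
    (hMM' : M * M' = 1) (hM'M : M' * M = 1) (i k : α) :
    sbr (π * (ρ i + ρ k)) x (M' i k) = -∑ q, ∑ p,
      (-1) ^ (π * (ρ i + ρ p)) * (M' i p * sbr (π * (ρ p + ρ q)) x (M p q)) * M' q k := by
  set v : α → B := fun p => sbr (π * (ρ i + ρ p)) x (M' i p)
  have hv : v ᵥ* M = -fun q => ∑ p, (-1) ^ (π * (ρ i + ρ p)) *
      (M' i p * sbr (π * (ρ p + ρ q)) x (M p q)) := by
    ext q
    have h := sbr_one_apply (π := π) (x := x) ρ i q
    rw [← hM'M, sbr_mul_apply ρ ρ ρ, Finset.sum_add_distrib] at h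
    exact eq_neg_of_add_eq_zero_left h
  have : v = v ᵥ* M ᵥ* M' := by rw [vecMul_vecMul, hMM', vecMul_one]
  rw [show sbr (π * (ρ i + ρ k)) x (M' i k) = v k from rfl, this, hv, neg_vecMul]
  simp [vecMul, dotProduct, Finset.sum_mul]

lemma Supercommutes.of_inverse [Fintype α] [DecidableEq α] {ρ : α → ℕ} {M M' : Matrix α α B}
    (hMM' : M * M' = 1) (hM'M : M' * M = 1) (hM : Supercommutes π x ρ ρ M) :
    Supercommutes π x ρ ρ M' := fun i k => by
  simp [sbr_inverse_apply ρ hMM' hM'M, hM _ _]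

end Supercommutes

section PowerSeries

/-- `ser t` is the matrix `T(u)`, with `X` standing for `u⁻¹`. -/
def ser {A α β : Type*} (f : α → β → ℕ → A) : Matrix α β A⟦X⟧ := of fun a b => mk (f a b)

@[simp] lemma ser_apply {A α β : Type*} (f : α → β → ℕ → A) (a : α) (b : β) :
    ser f a b = mk (f a b) := rfl

variable {A : Type*} [Ring A] {α β γ δ : Type*}

lemma coeff_neg_one_pow_mul (e n : ℕ) (f : A⟦X⟧) :
    coeff n ((-1) ^ e * f) = (-1) ^ e * coeff n f := by
  rw [show ((-1) ^ e : A⟦X⟧) = C ((-1) ^ e) by simp, coeff_C_mul]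

lemma coeff_sbr_C (ε n : ℕ) (a : A) (f : A⟦X⟧) :
    coeff n (sbr ε (C a) f) = sbr ε a (coeff n f) := by
  rw [sbr, sbr, map_sub, coeff_C_mul, coeff_neg_one_pow_mul, coeff_mul_C]

lemma sbr_C_eq_zero_iff {ε : ℕ} {a : A} {f : A⟦X⟧} :
    sbr ε (C a) f = 0 ↔ ∀ n, sbr ε a (coeff n f) = 0 := by
  simp only [PowerSeries.ext_iff, coeff_sbr_C, map_zero]

lemma eq_zero_of_forall_eq_X_mul {G : ℕ → A⟦X⟧} (h : ∀ r, G r = X * G (r + 1)) (r : ℕ) :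
    G r = 0 := by
  have hpow : ∀ n r, G r = X ^ n * G (r + n) := by
    intro n
    induction n with
    | zero => simp
    | succ n ih => intro r; rw [ih, h, pow_succ, mul_assoc, add_assoc]
  ext n
  rw [hpow (n + 1), coeff_X_pow_mul', if_neg (by omega), map_zero]

lemma conv_eq_coeff (f g : ℕ → A) (n : ℕ) : conv f g n = coeff n (mk f * mk g) := by
  simp [conv, coeff_mul]

lemma coeff_ser_mul_apply [Fintype β] (f : α → β → ℕ → A) (g : β → γ → ℕ → A)
    (a : α) (c : γ) (n : ℕ) : coeff n ((ser f * ser g) a c) = ∑ b, conv (f a b) (g b c) n := by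
  simp [mul_apply, conv_eq_coeff]

lemma coeff_ser_mul_ser_mul_apply [Fintype β] [Fintype γ] (f : α → β → ℕ → A)
    (g : β → γ → ℕ → A) (h : γ → δ → ℕ → A) (a : α) (d : δ) (n : ℕ) :
    coeff n ((ser f * (ser g * ser h)) a d) =
      ∑ b, ∑ c, conv (f a b) (conv (g b c) (h c d)) n := by
  have hgh : (ser g * ser h) = ser fun b d n => ∑ c, conv (g b c) (h c d) n := by
    ext b d n; rw [coeff_ser_mul_apply, ser_apply, coeff_mk]
  simp only [hgh, coeff_ser_mul_apply, conv, Finset.mul_sum]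
  exact Finset.sum_congr rfl fun b _ => Finset.sum_comm

lemma ser_mul_ser_eq_one [Fintype α] [DecidableEq α] {f g : α → α → ℕ → A}
    (h : ∀ i j n, ∑ p, conv (f i p) (g p j) n = if i = j ∧ n = 0 then 1 else 0) :
    ser f * ser g = 1 := by
  ext i j n
  rw [coeff_ser_mul_apply, h, one_apply, apply_ite (coeff n), coeff_one, map_zero]
  by_cases hij : i = j <;> simp [hij]

lemma supercommutes_C_coeff_of_forall {f : α → β → ℕ → A} {y : A⟦X⟧} {π : ℕ} {ρ : α → ℕ}
    {τ : β → ℕ} (h : ∀ a b r, sbr ((ρ a + τ b) * π) (C (f a b r)) y = 0) (s : ℕ) :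
    Supercommutes π (C (coeff s y)) ρ τ (ser f) := fun a b => by
  rw [sbr_C_eq_zero_iff]
  intro r
  rw [ser_apply, coeff_mk, mul_comm]
  exact sbr_eq_zero_swap (sbr_C_eq_zero_iff.1 (h a b r) s)

end PowerSeries

section RTT

variable {A : Type*} [Ring A] {ι : Type*}

def RTTRelation (par : ι → ℕ) (t : ι → ι → ℕ → A) : Prop :=
  ∀ i j l m : ι, ∀ r s : ℕ,
    sbr ((par i + par j) * (par l + par m)) (t i j (r + 1)) (t l m s)
        - sbr ((par i + par j) * (par l + par m)) (t i j r) (t l m (s + 1))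
      = (-1 : A) ^ (par i * par j + par i * par l + par j * par l) *
          (t l j r * t i m s - t l j s * t i m r)

variable [DecidableEq ι] {par : ι → ℕ} {t : ι → ι → ℕ → A}

/-- The RTT relation as an identity of power series in the second spectral parameter. -/
lemma X_mul_sbr_C_succ (h0 : ∀ i j, t i j 0 = if i = j then 1 else 0)
    (hrtt : RTTRelation par t) (i j p q : ι) (r : ℕ) :
    X * sbr ((par i + par j) * (par p + par q)) (C (t i j (r + 1))) (mk (t p q)) =
      sbr ((par i + par j) * (par p + par q)) (C (t i j r)) (mk (t p q)) +
        X * ((-1) ^ (par i * par j + par i * par p + par j * par p) *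
          (C (t p j r) * mk (t i q) - mk (t p j) * C (t i q r))) := by
  ext n
  cases n with
  | zero =>
    rw [map_add, coeff_zero_X_mul, coeff_zero_X_mul, coeff_sbr_C, coeff_mk, h0]
    split_ifs with hpq
    · subst hpq
      rw [sbr_one_right ⟨(par i + par j) * par p, by ring⟩]
      simp
    · simp
  | succ n =>
    rw [map_add, coeff_succ_X_mul, coeff_succ_X_mul, coeff_sbr_C, coeff_sbr_C,
      coeff_neg_one_pow_mul, map_sub, coeff_C_mul, coeff_mul_C, coeff_mk, coeff_mk, coeff_mk,
      coeff_mk, ← sub_eq_iff_eq_add', hrtt]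

variable [Fintype ι]

lemma sum_sum_inverse_rtt_eq_zero {T' : Matrix ι ι A⟦X⟧} (hTT' : ser t * T' = 1)
    (hT'T : T' * ser t = 1) {i j w c : ι} (hwj : w ≠ j) (hic : i ≠ c) (r : ℕ) :
    ∑ q, ∑ p, (-1) ^ ((par i + par j) * (par w + par p)) *
      (T' w p * ((-1) ^ (par i * par j + par i * par p + par j * par p) *
        (C (t p j r) * mk (t i q) - mk (t p j) * C (t i q r)))) * T' q c = 0 := by
  have hsign : ∀ p (y : A⟦X⟧), (-1) ^ ((par i + par j) * (par w + par p)) *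
      (T' w p * ((-1) ^ (par i * par j + par i * par p + par j * par p) * y)) =
      (-1) ^ ((par i + par j) * par w + par i * par j) * (T' w p * y) := by
    intro p y
    rw [← mul_assoc (T' w p), ← ((Commute.neg_one_left _).pow_left _).eq, mul_assoc,
      ← mul_assoc, ← pow_add]
    congr 1
    apply neg_one_pow_congr
    have : (par i + par j) * (par w + par p) + (par i * par j + par i * par p + par j * par p)
      = (par i + par j) * par w + par i * par j + 2 * ((par i + par j) * par p) := by ring
    omega
  have hright : ∑ q, mk (t i q) * T' q c = 0 := by
    simpa [mul_apply, one_apply_ne hic] using congrFun (congrFun hTT' i) c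
  have hleft : ∑ p, T' w p * mk (t p j) = 0 := by
    simpa [mul_apply, one_apply_ne hwj] using congrFun (congrFun hT'T w) j
  simp only [hsign, mul_sub, sub_mul, Finset.sum_sub_distrib, mul_assoc, ← Finset.mul_sum]
  have h₁ : ∑ q, ∑ p, T' w p * (C (t p j r) * (mk (t i q) * T' q c)) = 0 := by
    rw [Finset.sum_comm]
    simp only [← Finset.mul_sum, hright, mul_zero, Finset.sum_const_zero]
  have h₂ : ∑ q, ∑ p, T' w p * (mk (t p j) * (C (t i q r) * T' q c)) = 0 := by
    simp only [← mul_assoc, ← Finset.sum_mul, hleft, zero_mul, Finset.sum_const_zero]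
  rw [h₁, h₂, mul_zero, sub_zero]

theorem sbr_C_inverse_apply_eq_zero (h0 : ∀ i j, t i j 0 = if i = j then 1 else 0)
    (hrtt : RTTRelation par t) {T' : Matrix ι ι A⟦X⟧} (hTT' : ser t * T' = 1)
    (hT'T : T' * ser t = 1) {i j w c : ι} (hwj : w ≠ j) (hic : i ≠ c) (r : ℕ) :
    sbr ((par i + par j) * (par w + par c)) (C (t i j r)) (T' w c) = 0 := by
  have hG := fun r => sbr_inverse_apply (π := par i + par j) (x := C (t i j r)) par hTT' hT'T w c
  simp only [ser_apply] at hG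
  have hX : ∀ σ y z v : A⟦X⟧, X * (σ * (y * z) * v) = σ * (y * (X * z)) * v := by
    intro σ y z v
    rw [(commute_X y).left_comm, (commute_X σ).left_comm]
    exact (mul_assoc _ _ _).symm
  have hρ : ∀ r, ∑ q, ∑ p, (-1) ^ ((par i + par j) * (par w + par p)) *
      (T' w p * (X * ((-1) ^ (par i * par j + par i * par p + par j * par p) *
        (C (t p j r) * mk (t i q) - mk (t p j) * C (t i q r))))) * T' q c = 0 := by
    intro r
    simp only [← hX, ← Finset.mul_sum, sum_sum_inverse_rtt_eq_zero hTT' hT'T hwj hic, mul_zero]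
  refine eq_zero_of_forall_eq_X_mul
    (G := fun r => sbr ((par i + par j) * (par w + par c)) (C (t i j r)) (T' w c)) (fun r => ?_) r
  rw [hG, hG, mul_neg, Finset.mul_sum]
  simp only [Finset.mul_sum, hX, X_mul_sbr_C_succ h0 hrtt, mul_add (T' w _),
    mul_add ((-1 : A⟦X⟧) ^ _), add_mul (R := A⟦X⟧), Finset.sum_add_distrib, hρ, add_zero]

end RTT

section BlockUnits

variable {R : Type*} [Ring R] {m n : Type*} [Fintype m] [Fintype n] [DecidableEq m]
  [DecidableEq n]

def lowerUnit (P : (Matrix m m R)ˣ) (Q : Matrix n m R) : (Matrix (m ⊕ n) (m ⊕ n) R)ˣ where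
  val := fromBlocks (P : Matrix m m R) 0 Q 1
  inv := fromBlocks (↑P⁻¹ : Matrix m m R) 0 (-(Q * (↑P⁻¹ : Matrix m m R))) 1
  val_inv := by simp [fromBlocks_multiply]
  inv_val := by simp [fromBlocks_multiply, Matrix.mul_assoc]

def upperUnit (P : (Matrix m m R)ˣ) (Q : Matrix m n R) : (Matrix (m ⊕ n) (m ⊕ n) R)ˣ where
  val := fromBlocks (P : Matrix m m R) Q 0 1
  inv := fromBlocks (↑P⁻¹ : Matrix m m R) (-((↑P⁻¹ : Matrix m m R) * Q)) 0 1
  val_inv := by simp [fromBlocks_multiply, ← Matrix.mul_assoc]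
  inv_val := by simp [fromBlocks_multiply]

def diagUnit (P : (Matrix m m R)ˣ) (S : (Matrix n n R)ˣ) : (Matrix (m ⊕ n) (m ⊕ n) R)ˣ where
  val := fromBlocks (P : Matrix m m R) 0 0 (S : Matrix n n R)
  inv := fromBlocks (↑P⁻¹ : Matrix m m R) 0 0 (↑S⁻¹ : Matrix n n R)
  val_inv := by simp [fromBlocks_multiply]
  inv_val := by simp [fromBlocks_multiply]

end BlockUnits

section Gauss

variable {A : Type*} [Ring A] {μ1 μ2 μ3 : ℕ}

abbrev BlockIndex (μ1 μ2 μ3 : ℕ) : Type := (Fin μ1 ⊕ Fin μ2) ⊕ Fin μ3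

def blockEquiv (μ1 μ2 μ3 : ℕ) : BlockIndex μ1 μ2 μ3 ≃ Fin (μ1 + μ2 + μ3) :=
  (Equiv.sumCongr finSumFinEquiv (Equiv.refl _)).trans finSumFinEquiv

@[simp] lemma blockEquiv_inl_inl (a : Fin μ1) :
    blockEquiv μ1 μ2 μ3 (.inl (.inl a)) = e1 μ1 μ2 μ3 a := rfl

@[simp] lemma blockEquiv_inl_inr (a : Fin μ2) :
    blockEquiv μ1 μ2 μ3 (.inl (.inr a)) = e2 μ1 μ2 μ3 a := rfl

@[simp] lemma blockEquiv_inr (a : Fin μ3) : blockEquiv μ1 μ2 μ3 (.inr a) = e3 μ1 μ2 μ3 a := rfl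

noncomputable def serUnit {α : Type*} [Fintype α] [DecidableEq α] {f g : α → α → ℕ → A}
    (h : ∀ i j n, ∑ p, conv (f i p) (g p j) n = if i = j ∧ n = 0 then 1 else 0)
    (h' : ∀ i j n, ∑ p, conv (g i p) (f p j) n = if i = j ∧ n = 0 then 1 else 0) :
    (Matrix α α A⟦X⟧)ˣ :=
  ⟨ser f, ser g, ser_mul_ser_eq_one h, ser_mul_ser_eq_one h'⟩

variable {par : Fin (μ1 + μ2 + μ3) → ℕ} {t : Fin (μ1 + μ2 + μ3) → Fin (μ1 + μ2 + μ3) → ℕ → A}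
  {D1 D1' : Fin μ1 → Fin μ1 → ℕ → A} {D2 D2' : Fin μ2 → Fin μ2 → ℕ → A}
  {D3 D3' : Fin μ3 → Fin μ3 → ℕ → A}
  {E1 : Fin μ1 → Fin μ2 → ℕ → A} {E2 : Fin μ2 → Fin μ3 → ℕ → A} {E13 : Fin μ1 → Fin μ3 → ℕ → A}
  {F1 : Fin μ2 → Fin μ1 → ℕ → A} {F2 : Fin μ3 → Fin μ2 → ℕ → A} {F31 : Fin μ3 → Fin μ1 → ℕ → A}
  (hG : GaussData3 μ1 μ2 μ3 par t D1 D1' D2 D2' D3 D3' E1 E2 E13 F1 F2 F31)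

include hG

noncomputable def gaussUnit : (Matrix (BlockIndex μ1 μ2 μ3) (BlockIndex μ1 μ2 μ3) A⟦X⟧)ˣ :=
  lowerUnit (lowerUnit 1 (ser F1)) (fromCols (ser F31) (ser F2)) *
    diagUnit (diagUnit (serUnit hG.hD1inv hG.hD1inv') (serUnit hG.hD2inv hG.hD2inv'))
      (serUnit hG.hD3inv hG.hD3inv') *
    upperUnit (upperUnit 1 (ser E1)) (fromRows (ser E13) (ser E2))

noncomputable def gaussInv : Matrix (BlockIndex μ1 μ2 μ3) (BlockIndex μ1 μ2 μ3) A⟦X⟧ :=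
  ↑(gaussUnit hG)⁻¹

lemma ser_eq_gaussUnit :
    ser (fun l m => t (blockEquiv μ1 μ2 μ3 l) (blockEquiv μ1 μ2 μ3 m)) = gaussUnit hG := by
  simp [gaussUnit, lowerUnit, diagUnit, upperUnit, serUnit, fromBlocks_multiply,
    fromCols_mul_fromBlocks, fromBlocks_mul_fromRows, fromCols_mul_fromRows, Matrix.mul_assoc]
  ext ((a | a) | a) ((b | b) | b) n <;>
    simp [coeff_ser_mul_apply, coeff_ser_mul_ser_mul_apply, hG.hT11, hG.hT12, hG.hT13, hG.hT21,
      hG.hT22, hG.hT23, hG.hT31, hG.hT32, hG.hT33]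

lemma gaussInv_inr_inr (h k : Fin μ3) : gaussInv hG (.inr h) (.inr k) = ser D3' h k := by
  simp [gaussInv, gaussUnit, lowerUnit, diagUnit, upperUnit, serUnit, fromBlocks_multiply,
    fromCols_mul_fromBlocks, fromBlocks_mul_fromRows, _root_.mul_inv_rev]

lemma gaussInv_inr_inl_inr (h : Fin μ3) (k : Fin μ2) :
    gaussInv hG (.inr h) (.inl (.inr k)) = -(ser D3' * ser F2) h k := by
  simp [gaussInv, gaussUnit, lowerUnit, diagUnit, upperUnit, serUnit, fromBlocks_multiply,
    fromCols_mul_fromBlocks, fromBlocks_mul_fromRows, _root_.mul_inv_rev]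

lemma sbr_C_gaussInv_apply_eq_zero {l m w c : BlockIndex μ1 μ2 μ3} (hwm : w ≠ m) (hlc : l ≠ c)
    (r : ℕ) :
    let φ := blockEquiv μ1 μ2 μ3
    sbr ((par (φ l) + par (φ m)) * (par (φ w) + par (φ c))) (C (t (φ l) (φ m) r))
      (gaussInv hG w c) = 0 :=
  sbr_C_inverse_apply_eq_zero (par := par ∘ blockEquiv μ1 μ2 μ3)
    (fun l m => by simp [hG.h0]) (fun i j l m => hG.hrtt _ _ _ _)
    (by rw [ser_eq_gaussUnit hG]; exact (gaussUnit hG).mul_inv)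
    (by rw [ser_eq_gaussUnit hG]; exact (gaussUnit hG).inv_mul) hwm hlc r

lemma supercommutes_D1_D3inv (a b : Fin μ1) (r : ℕ) :
    Supercommutes (par (e1 μ1 μ2 μ3 a) + par (e1 μ1 μ2 μ3 b)) (C (D1 a b r))
      (par ∘ e3 μ1 μ2 μ3) (par ∘ e3 μ1 μ2 μ3) (ser D3') := fun h k => by
  simpa [hG.hT11, gaussInv_inr_inr] using sbr_C_gaussInv_apply_eq_zero hG
    (l := .inl (.inl a)) (m := .inl (.inl b)) (w := .inr h) (c := .inr k) (by simp) (by simp) r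

lemma supercommutes_T21_D3inv (a : Fin μ2) (b : Fin μ1) (r : ℕ) :
    Supercommutes (par (e2 μ1 μ2 μ3 a) + par (e1 μ1 μ2 μ3 b))
      (C (t (e2 μ1 μ2 μ3 a) (e1 μ1 μ2 μ3 b) r)) (par ∘ e3 μ1 μ2 μ3) (par ∘ e3 μ1 μ2 μ3)
      (ser D3') := fun h k => by
  simpa [gaussInv_inr_inr] using sbr_C_gaussInv_apply_eq_zero hG
    (l := .inl (.inr a)) (m := .inl (.inl b)) (w := .inr h) (c := .inr k) (by simp) (by simp) r

lemma supercommutes_D1_D3inv_mul_F2 (a b : Fin μ1) (r : ℕ) :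
    Supercommutes (par (e1 μ1 μ2 μ3 a) + par (e1 μ1 μ2 μ3 b)) (C (D1 a b r))
      (par ∘ e3 μ1 μ2 μ3) (par ∘ e2 μ1 μ2 μ3) (ser D3' * ser F2) := fun h k => by
  simpa [hG.hT11, gaussInv_inr_inl_inr, sbr_neg_right] using sbr_C_gaussInv_apply_eq_zero hG
    (l := .inl (.inl a)) (m := .inl (.inl b)) (w := .inr h) (c := .inl (.inr k)) (by simp)
    (by simp) r

theorem sbr_D1_F2_eq_zero (i j : Fin μ1) (h : Fin μ3) (k : Fin μ2) (r s : ℕ) :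
    sbr ((par (e1 μ1 μ2 μ3 i) + par (e1 μ1 μ2 μ3 j)) *
      (par (e3 μ1 μ2 μ3 h) + par (e2 μ1 μ2 μ3 k))) (D1 i j r) (F2 h k s) = 0 := by
  have hD3 := (supercommutes_D1_D3inv hG i j r).of_inverse (ser_mul_ser_eq_one hG.hD3inv')
    (ser_mul_ser_eq_one hG.hD3inv)
  have hF2 := hD3.mul (supercommutes_D1_D3inv_mul_F2 hG i j r)
  rw [← Matrix.mul_assoc, ser_mul_ser_eq_one hG.hD3inv, Matrix.one_mul] at hF2
  simpa using sbr_C_eq_zero_iff.1 (hF2 h k) s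

theorem sbr_F1_D3inv_eq_zero (i : Fin μ2) (j : Fin μ1) (h k : Fin μ3) (r s : ℕ) :
    sbr ((par (e2 μ1 μ2 μ3 i) + par (e1 μ1 μ2 μ3 j)) *
      (par (e3 μ1 μ2 μ3 h) + par (e3 μ1 μ2 μ3 k))) (F1 i j r) (D3' h k s) = 0 := by
  have hD1' := (supercommutes_C_coeff_of_forall
    (fun a b r => supercommutes_D1_D3inv hG a b r h k) s).of_inverse
    (ser_mul_ser_eq_one hG.hD1inv) (ser_mul_ser_eq_one hG.hD1inv')
  have hT21 := supercommutes_C_coeff_of_forall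
    (fun a b r => supercommutes_T21_D3inv hG a b r h k) s
  have hT21_eq : ser (fun a b => t (e2 μ1 μ2 μ3 a) (e1 μ1 μ2 μ3 b)) = ser F1 * ser D1 := by
    ext a b n
    simp [coeff_ser_mul_apply, hG.hT21]
  have hF1 := hT21.mul hD1'
  rw [hT21_eq, Matrix.mul_assoc, ser_mul_ser_eq_one hG.hD1inv, Matrix.mul_one] at hF1
  have := sbr_C_eq_zero_iff.1 (hF1 i j) r
  rw [ser_apply, coeff_mk, ser_apply, coeff_mk, mul_comm] at this
  exact sbr_eq_zero_swap this

end Gauss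

end SuperYangian

open SuperYangian in
/-- with `μ = (μ1, μ2, μ3)`, in `Y_μ`:
`[D_{1;i,j}(u), F_{2;h,k}(v)] = 0` and `[F_{1;i,j}(u), D'_{3;h,k}(v)] = 0`
(stated coefficientwise: each pair of coefficients supercommutes). -/
theorem statement15 {A : Type*} [Ring A] (μ1 μ2 μ3 : ℕ)
    (par : Fin (μ1 + μ2 + μ3) → ℕ)
    (t : Fin (μ1 + μ2 + μ3) → Fin (μ1 + μ2 + μ3) → ℕ → A)
    (D1 D1' : Fin μ1 → Fin μ1 → ℕ → A) (D2 D2' : Fin μ2 → Fin μ2 → ℕ → A)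
    (D3 D3' : Fin μ3 → Fin μ3 → ℕ → A)
    (E1 : Fin μ1 → Fin μ2 → ℕ → A) (E2 : Fin μ2 → Fin μ3 → ℕ → A)
    (E13 : Fin μ1 → Fin μ3 → ℕ → A)
    (F1 : Fin μ2 → Fin μ1 → ℕ → A) (F2 : Fin μ3 → Fin μ2 → ℕ → A)
    (F31 : Fin μ3 → Fin μ1 → ℕ → A)
    (hG : GaussData3 μ1 μ2 μ3 par t D1 D1' D2 D2' D3 D3' E1 E2 E13 F1 F2 F31) :
    (∀ (i j : Fin μ1) (h : Fin μ3) (k : Fin μ2) (r s : ℕ),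
      sbr ((par (e1 μ1 μ2 μ3 i) + par (e1 μ1 μ2 μ3 j)) *
            (par (e3 μ1 μ2 μ3 h) + par (e2 μ1 μ2 μ3 k)))
        (D1 i j r) (F2 h k s) = 0) ∧
    (∀ (i : Fin μ2) (j : Fin μ1) (h k : Fin μ3) (r s : ℕ),
      sbr ((par (e2 μ1 μ2 μ3 i) + par (e1 μ1 μ2 μ3 j)) *
            (par (e3 μ1 μ2 μ3 h) + par (e3 μ1 μ2 μ3 k)))
        (F1 i j r) (D3' h k s) = 0) :=
  ⟨sbr_D1_F2_eq_zero hG, sbr_F1_D3inv_eq_zero hG⟩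
end
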